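/- Fix n ≥ 2 and a partition λ = (λ_1 > λ_2 > … > λ_{n−1} > λ_n = 0) with distinct parts. Let 𝒯_{[n]}(λ) be the set of fillings σ of the Young diagram of λ with entries in {1,…,n} such that: (i) the rows of σ are weakly increasing; and (ii) σ(u) ≠ σ(v) whenever the cells u and v are attacking, i.e., they lie in the same column, or they lie in two consecutive columns with the right cell strictly below the left one. Then the map (w,T) ↦ σ(w,T) is a surjection from 𝒜(λ) onto 𝒯_{[n]}(λ): σ(w,T) ∈ 𝒯_{[n]}(λ) for every admissible pair (w,T), and every σ ∈ 𝒯_{[n]}(λ) equals σ(w,T) for some (w,T) ∈ 𝒜(λ). -/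

import Mathlib

/-- The conjugate partition: `conj n lam j` is the length `λ'_j` of the `j`-th column
(`j` being `1`-indexed) of the partition `λ = (lam 0, lam 1, …)`. -/
def conj (n : ℕ) (lam : ℕ → ℕ) (j : ℕ) : ℕ :=
  ((Finset.range n).filter fun i => j ≤ lam i).card

/-- The sequence of transpositions `Γ_{k,i} = ((i, k+1), (i, k+2), …, (i, n))`
(all entries `1`-indexed). -/
def GammaKI (n k i : ℕ) : List (ℕ × ℕ) :=
  (List.range (n - k)).map fun d => (i, k + 1 + d)

/-- The sequence of transpositions `Γ_k = Γ_{k,k} Γ_{k,k-1} ⋯ Γ_{k,1}`. -/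
def GammaK (n k : ℕ) : List (ℕ × ℕ) :=
  ((List.range k).map fun d => GammaKI n k (k - d)).flatten

/-- Right multiplication of the permutation `w` by the transpositions listed in `ts`,
in order: `w t_1 t_2 ⋯ t_m`. -/
def applyT (w : Equiv.Perm ℕ) (ts : List (ℕ × ℕ)) : Equiv.Perm ℕ :=
  ts.foldl (fun u p => u * Equiv.swap p.1 p.2) w

/-- The length (number of inversions) of a permutation of `{1, …, n}`. -/
def len (n : ℕ) (w : Equiv.Perm ℕ) : ℕ :=
  (((Finset.Icc 1 n) ×ˢ (Finset.Icc 1 n)).filter fun p => p.1 < p.2 ∧ w p.2 < w p.1).card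

/-- An admissible pair `(w, T)` for the partition `λ = (lam 0, …, lam (n-1))`:
`w` is a permutation of `{1, …, n}` (a permutation of `ℕ` fixing everything outside
`{1, …, n}`), and `T = T_1 T_2 ⋯ T_{λ_1}` where `T_j` is a subword of `Γ_{λ'_j}`, such
that the lengths `ℓ(w t_1 ⋯ t_i)` strictly increase along the concatenation
`t_1, …, t_m` of the `T_j`. -/
structure AdmissiblePair (n : ℕ) (lam : ℕ → ℕ) where
  w : Equiv.Perm ℕ
  T : List (List (ℕ × ℕ))
  hw : ∀ i, i = 0 ∨ n < i → w i = i
  hT : T.length = lam 0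
  hsub : ∀ j < T.length, (T.getD j []).Sublist (GammaK n (conj n lam (j + 1)))
  hchain : ∀ i < T.flatten.length,
    len n (applyT w (T.flatten.take i)) < len n (applyT w (T.flatten.take (i + 1)))

/-- The permutation `π_j = w T_1 ⋯ T_j` associated with an admissible pair. -/
def piCol {n : ℕ} {lam : ℕ → ℕ} (a : AdmissiblePair n lam) (j : ℕ) : Equiv.Perm ℕ :=
  applyT a.w ((a.T.take j).flatten)

/-- The filling `σ(w, T)` of the Young diagram of `λ` associated with an admissible pair:
the `j`-th column contains `π_j(1), …, π_j(λ'_j)` from top to bottom (rows and columns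
are `1`-indexed; the value is `0` outside the diagram). -/
def sigmaOf {n : ℕ} {lam : ℕ → ℕ} (a : AdmissiblePair n lam) : ℕ → ℕ → ℕ :=
  fun r c => if 1 ≤ r ∧ 1 ≤ c ∧ r ≤ conj n lam c then piCol a c r else 0

/-- `σ` is (the indicator-extension of) a semistandard Young tableau of shape `λ` with
entries in `{1, …, n}`: entries vanish outside the diagram, lie in `{1, …, n}` on the
diagram, rows weakly increase and columns strictly increase. -/
def IsSSYT (n : ℕ) (lam : ℕ → ℕ) (σ : ℕ → ℕ → ℕ) : Prop :=
  (∀ r c, ¬(1 ≤ r ∧ 1 ≤ c ∧ r ≤ conj n lam c) → σ r c = 0) ∧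
  (∀ r c, 1 ≤ r → 1 ≤ c → r ≤ conj n lam c → 1 ≤ σ r c ∧ σ r c ≤ n) ∧
  (∀ r c, 1 ≤ r → 1 ≤ c → r ≤ conj n lam (c + 1) → σ r c ≤ σ r (c + 1)) ∧
  (∀ r c, 1 ≤ r → 1 ≤ c → r + 1 ≤ conj n lam c → σ r c < σ (r + 1) c)

/-- `σ` is (the indicator-extension of) a filling of the Young diagram of `λ` with entries
in `{1, …, n}` whose rows weakly increase and in which any two attacking cells (two cells
in the same column, or cells in consecutive columns with the right one strictly below the
left one) have distinct entries. -/
def IsHHLFilling (n : ℕ) (lam : ℕ → ℕ) (σ : ℕ → ℕ → ℕ) : Prop :=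
  (∀ r c, ¬(1 ≤ r ∧ 1 ≤ c ∧ r ≤ conj n lam c) → σ r c = 0) ∧
  (∀ r c, 1 ≤ r → 1 ≤ c → r ≤ conj n lam c → 1 ≤ σ r c ∧ σ r c ≤ n) ∧
  (∀ r c, 1 ≤ r → 1 ≤ c → r ≤ conj n lam (c + 1) → σ r c ≤ σ r (c + 1)) ∧
  (∀ r r' c, 1 ≤ c → 1 ≤ r → 1 ≤ r' → r ≤ conj n lam c → r' ≤ conj n lam c →
    r ≠ r' → σ r c ≠ σ r' c) ∧
  (∀ r r' c, 1 ≤ c → 1 ≤ r → r ≤ conj n lam c → 1 ≤ r' → r' ≤ conj n lam (c + 1) →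
    r < r' → σ r c ≠ σ r' (c + 1))

/-!
Write `π_c = w T_1 ⋯ T_c`. For `1 ≤ i < j ≤ n`, right multiplication by `(i, j)` raises the
length exactly when it swaps values `π(i) < π(j)`, so admissibility says that every transposition
of `T` moves a smaller value to the later position. A transposition `(i, b)` of `Γ_k` has
`i ≤ k < b`, and the first entries decrease along `Γ_k`. Hence passing from `π_c` to `π_{c+1}`
can only increase the entries in the rows of column `c + 1`, and never brings the value of row `r`
down to a row `r' ≤ λ'_{c+1}`: these are exactly the row and attack conditions.

Conversely, let `w` carry the first column of `σ`. Given `π_c` carrying column `c`, rows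
`λ'_{c+1}, …, 1` of column `c + 1` are corrected from the bottom up, row `m` by at most one
transposition of `Γ_{λ'_{c+1}, m}`: the row and attack conditions of `σ` guarantee that the
target value sits beyond row `λ'_{c+1}` and exceeds the current one.
-/

open Equiv

section Length

variable {n i j : ℕ} {u : Perm ℕ}

def inversions (n : ℕ) (u : Perm ℕ) : Finset (ℕ × ℕ) :=
  ((Finset.Icc 1 n) ×ˢ (Finset.Icc 1 n)).filter fun p => p.1 < p.2 ∧ u p.2 < u p.1

lemma len_eq_card_inversions : len n u = (inversions n u).card := rfl

lemma mem_inversions {p : ℕ × ℕ} :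
    p ∈ inversions n u ↔ 1 ≤ p.1 ∧ p.2 ≤ n ∧ p.1 < p.2 ∧ u p.2 < u p.1 := by
  simp only [inversions, Finset.mem_filter, Finset.mem_product, Finset.mem_Icc]
  omega

/-- When `u i < u j`, this maps the inversions of `u`, together with `(i, j)`, injectively into
those of `u * swap i j`: an inversion `(a, i)` or `(j, b)` destroyed by the swap is traded for
`(a, j)` or `(i, b)`. -/
def moveInversion (u : Perm ℕ) (i j : ℕ) (p : ℕ × ℕ) : ℕ × ℕ :=
  if p.2 = i ∧ u p.1 < u j then (p.1, j)
  else if p.1 = j ∧ u i < u p.2 then (i, p.2)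
  else p

lemma moveInversion_mem_inversions (hi : 1 ≤ i) (hij : i < j) (hj : j ≤ n) (h : u i < u j)
    {p : ℕ × ℕ} (hp : p ∈ insert (i, j) (inversions n u)) :
    moveInversion u i j p ∈ inversions n (u * swap i j) := by
  obtain ⟨a, b⟩ := p
  have : ∀ x y, u x = u y ↔ x = y := fun _ _ ↦ u.injective.eq_iff
  simp only [Finset.mem_insert, mem_inversions, Prod.mk.injEq] at hp
  unfold moveInversion
  split_ifs <;> simp only [mem_inversions, Perm.mul_apply, swap_apply_def] <;> split_ifs <;> grind

lemma injOn_moveInversion (hij : i < j) :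
    Set.InjOn (moveInversion u i j) ↑(insert (i, j) (inversions n u)) := by
  rintro ⟨a, b⟩ hp ⟨c, d⟩ hq hpq
  have : ∀ x y, u x = u y ↔ x = y := fun _ _ ↦ u.injective.eq_iff
  simp only [Finset.coe_insert, Set.mem_insert_iff, Finset.mem_coe, mem_inversions,
    Prod.mk.injEq] at hp hq
  unfold moveInversion at hpq
  split_ifs at hpq <;> grind

theorem len_lt_len_mul_swap (hi : 1 ≤ i) (hij : i < j) (hj : j ≤ n) (h : u i < u j) :
    len n u < len n (u * swap i j) := by
  have hij_mem : (i, j) ∉ inversions n u := by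
    simp only [mem_inversions]
    omega
  calc len n u < (insert (i, j) (inversions n u)).card := by
        rw [Finset.card_insert_of_notMem hij_mem, len_eq_card_inversions]
        exact Nat.lt_succ_self _
    _ ≤ len n (u * swap i j) :=
        Finset.card_le_card_of_injOn (moveInversion u i j)
          (fun _ hp ↦ moveInversion_mem_inversions hi hij hj h hp) (injOn_moveInversion hij)

theorem len_lt_len_mul_swap_iff (hi : 1 ≤ i) (hij : i < j) (hj : j ≤ n) :
    len n u < len n (u * swap i j) ↔ u i < u j := by
  refine ⟨fun hlt ↦ ?_, len_lt_len_mul_swap hi hij hj⟩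
  by_contra hge
  have hji : (u * swap i j) i < (u * swap i j) j := by
    simp only [Perm.mul_apply, swap_apply_left, swap_apply_right]
    exact lt_of_le_of_ne (not_lt.mp hge) (u.injective.ne hij.ne')
  have := len_lt_len_mul_swap hi hij hj hji
  rw [mul_assoc, swap_mul_self, mul_one] at this
  exact lt_asymm hlt this

end Length

section Words

variable {n : ℕ} {u w : Perm ℕ} {L L₁ L₂ : List (ℕ × ℕ)}

@[simp] lemma applyT_nil (w : Perm ℕ) : applyT w [] = w := rfl

@[simp] lemma applyT_cons (w : Perm ℕ) (p : ℕ × ℕ) (L : List (ℕ × ℕ)) :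
    applyT w (p :: L) = applyT (w * swap p.1 p.2) L := rfl

lemma applyT_append (w : Perm ℕ) (L₁ L₂ : List (ℕ × ℕ)) :
    applyT w (L₁ ++ L₂) = applyT (applyT w L₁) L₂ := List.foldl_append

def Ascends : Perm ℕ → List (ℕ × ℕ) → Prop
  | _, [] => True
  | u, p :: L => u p.1 < u p.2 ∧ Ascends (u * swap p.1 p.2) L

@[simp] lemma ascends_nil (u : Perm ℕ) : Ascends u [] := trivial

@[simp] lemma ascends_cons {p : ℕ × ℕ} :
    Ascends u (p :: L) ↔ u p.1 < u p.2 ∧ Ascends (u * swap p.1 p.2) L := Iff.rfl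

lemma ascends_append :
    Ascends u (L₁ ++ L₂) ↔ Ascends u L₁ ∧ Ascends (applyT u L₁) L₂ := by
  induction L₁ generalizing u with
  | nil => simp
  | cons p L ih => simp [ih, and_assoc]

theorem lengthChain_iff_ascends (hL : ∀ p ∈ L, 1 ≤ p.1 ∧ p.1 < p.2 ∧ p.2 ≤ n) :
    (∀ i < L.length, len n (applyT w (L.take i)) < len n (applyT w (L.take (i + 1)))) ↔
      Ascends w L := by
  induction L generalizing w with
  | nil => simp
  | cons p L ih =>
    obtain ⟨h1, h12, h2⟩ := hL p List.mem_cons_self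
    rw [List.length_cons, Nat.forall_lt_succ_left, ascends_cons,
      ← ih fun q hq ↦ hL q (List.mem_cons_of_mem p hq), ← len_lt_len_mul_swap_iff h1 h12 h2]
    simp

lemma applyT_apply_of_forall_ne {r : ℕ} (h : ∀ p ∈ L, p.1 ≠ r ∧ p.2 ≠ r) :
    applyT u L r = u r := by
  induction L generalizing u with
  | nil => rfl
  | cons p L ih =>
    obtain ⟨h1, h2⟩ := h p List.mem_cons_self
    rw [applyT_cons, ih fun q hq ↦ h q (List.mem_cons_of_mem p hq), Perm.mul_apply,
      swap_apply_of_ne_of_ne h1.symm h2.symm]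

lemma le_applyT_apply {r : ℕ} (hL : Ascends u L) (h : ∀ p ∈ L, p.2 ≠ r) :
    u r ≤ applyT u L r := by
  induction L generalizing u with
  | nil => exact le_rfl
  | cons p L ih =>
    refine le_trans ?_ (ih hL.2 fun q hq ↦ h q (List.mem_cons_of_mem p hq))
    rw [Perm.mul_apply]
    by_cases h1 : p.1 = r
    · subst h1
      rw [swap_apply_left]
      exact hL.1.le
    · rw [swap_apply_of_ne_of_ne (Ne.symm h1) (h p List.mem_cons_self).symm]

/-- Position `r` is untouched until the first transposition `(a, _)` with `a < r'`, and from
then on position `r'` is untouched. -/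
lemma applyT_apply_ne {k r r' : ℕ} (hL : ∀ p ∈ L, p.1 ≤ k ∧ k < p.2)
    (hdec : L.Pairwise fun p q ↦ q.1 ≤ p.1) (hr : r < r') (hr' : r' ≤ k) :
    applyT u L r' ≠ u r := by
  induction L generalizing u with
  | nil => exact u.injective.ne hr.ne'
  | cons p L ih =>
    have hp := hL p List.mem_cons_self
    rcases le_or_gt r' p.1 with hle | hlt
    · have hfix : (u * swap p.1 p.2) r = u r := by
        rw [Perm.mul_apply, swap_apply_of_ne_of_ne (by omega) (by omega)]
      rw [applyT_cons, ← hfix]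
      exact ih (fun q hq ↦ hL q (List.mem_cons_of_mem p hq)) (List.pairwise_cons.mp hdec).2
    · rw [applyT_apply_of_forall_ne]
      · exact u.injective.ne hr.ne'
      · intro q hq
        have hq2 := (hL q hq).2
        rcases List.mem_cons.mp hq with rfl | hq
        · omega
        · have := (List.pairwise_cons.mp hdec).1 q hq
          omega

end Words

section FixesOutside

def FixesOutside (n : ℕ) (u : Perm ℕ) : Prop := ∀ i, i = 0 ∨ n < i → u i = i

variable {n : ℕ} {u : Perm ℕ}

lemma FixesOutside.apply_mem (hu : FixesOutside n u) {r : ℕ} (h1 : 1 ≤ r) (h2 : r ≤ n) :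
    1 ≤ u r ∧ u r ≤ n := by
  by_contra hout
  have hfix := hu (u r) (by omega)
  rw [u.injective hfix] at hfix
  omega

lemma FixesOutside.symm (hu : FixesOutside n u) : FixesOutside n u.symm :=
  fun i hi ↦ u.symm_apply_eq.mpr (hu i hi).symm

lemma FixesOutside.mul_swap (hu : FixesOutside n u) {a b : ℕ} (ha : 1 ≤ a ∧ a ≤ n)
    (hb : 1 ≤ b ∧ b ≤ n) : FixesOutside n (u * swap a b) := fun i hi ↦ by
  rw [Perm.mul_apply, swap_apply_of_ne_of_ne (by omega) (by omega), hu i hi]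

lemma FixesOutside.applyT (hu : FixesOutside n u) {L : List (ℕ × ℕ)}
    (hL : ∀ p ∈ L, 1 ≤ p.1 ∧ p.1 < p.2 ∧ p.2 ≤ n) : FixesOutside n (applyT u L) := by
  induction L generalizing u with
  | nil => exact hu
  | cons p L ih =>
    obtain ⟨h1, h12, h2⟩ := hL p List.mem_cons_self
    exact ih (hu.mul_swap ⟨h1, by omega⟩ ⟨by omega, h2⟩) fun q hq ↦
      hL q (List.mem_cons_of_mem p hq)

theorem exists_fixesOutside_eqOn {k : ℕ} {b : ℕ → ℕ} (hk : k ≤ n)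
    (hmaps : Set.MapsTo b (Set.Icc 1 k) (Set.Icc 1 n)) (hinj : Set.InjOn b (Set.Icc 1 k)) :
    ∃ w : Perm ℕ, FixesOutside n w ∧ Set.EqOn w b (Set.Icc 1 k) := by
  classical
  let t := Finset.Icc 1 n
  have hmem {x : t} (hx : x.1 ≤ k) : x.1 ∈ Set.Icc 1 k := ⟨(Finset.mem_Icc.mp x.2).1, hx⟩
  obtain ⟨g, hg⟩ := Set.MapsTo.exists_equiv_extend_of_card_eq (t := t) (s := {x | x.1 ≤ k})
    (f := fun x ↦ b x) (Fintype.card_coe t)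
    (fun x hx ↦ Finset.mem_coe.mpr (Finset.mem_Icc.mpr (hmaps (hmem hx))))
    (fun x hx y hy hxy ↦ Subtype.ext (hinj (hmem hx) (hmem hy) hxy))
  refine ⟨Perm.ofSubtype g, fun i hi ↦ Perm.ofSubtype_apply_of_not_mem g ?_, fun r hr ↦ ?_⟩
  · simp only [t, Finset.mem_Icc]
    omega
  · have hrt : r ∈ t := Finset.mem_Icc.mpr ⟨hr.1, hr.2.trans hk⟩
    rw [Perm.ofSubtype_apply_of_mem g hrt]
    exact hg ⟨r, hrt⟩ hr.2

end FixesOutside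

section Gamma

variable {n k m : ℕ} {p : ℕ × ℕ}

/-- `Γ_{k,m} Γ_{k,m-1} ⋯ Γ_{k,1}`. -/
def gammaUpTo (n k m : ℕ) : List (ℕ × ℕ) :=
  ((List.range m).map fun d ↦ GammaKI n k (m - d)).flatten

lemma gammaUpTo_self (n k : ℕ) : gammaUpTo n k k = GammaK n k := rfl

lemma gammaUpTo_succ (n k m : ℕ) :
    gammaUpTo n k (m + 1) = GammaKI n k (m + 1) ++ gammaUpTo n k m := by
  simp only [gammaUpTo, List.range_succ_eq_map, List.map_cons, List.flatten_cons, List.map_map,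
    Function.comp_def, Nat.sub_zero, Nat.succ_sub_succ]

lemma mem_GammaKI {i : ℕ} : p ∈ GammaKI n k i ↔ p.1 = i ∧ k < p.2 ∧ p.2 ≤ n := by
  simp only [GammaKI, List.mem_map, List.mem_range]
  constructor
  · rintro ⟨d, hd, rfl⟩
    omega
  · rintro ⟨h1, h2, h3⟩
    exact ⟨p.2 - (k + 1), by omega, Prod.ext h1.symm (by omega)⟩

lemma mem_gammaUpTo (h : p ∈ gammaUpTo n k m) :
    1 ≤ p.1 ∧ p.1 ≤ m ∧ k < p.2 ∧ p.2 ≤ n := by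
  induction m with
  | zero => simp [gammaUpTo] at h
  | succ m ih =>
    rcases List.mem_append.mp ((gammaUpTo_succ n k m) ▸ h) with h | h
    · have := mem_GammaKI.mp h
      omega
    · have := ih h
      omega

lemma pairwise_gammaUpTo (n k m : ℕ) : (gammaUpTo n k m).Pairwise fun p q ↦ q.1 ≤ p.1 := by
  induction m with
  | zero => simp [gammaUpTo]
  | succ m ih =>
    rw [gammaUpTo_succ, List.pairwise_append]
    refine ⟨List.pairwise_of_forall_mem_list fun p hp q hq ↦ ?_, ih, fun p hp q hq ↦ ?_⟩
    · rw [(mem_GammaKI.mp hp).1, (mem_GammaKI.mp hq).1]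
    · have := (mem_GammaKI.mp hp).1
      have := (mem_gammaUpTo hq).2.1
      omega

lemma mem_GammaK (h : p ∈ GammaK n k) : 1 ≤ p.1 ∧ p.1 ≤ k ∧ k < p.2 ∧ p.2 ≤ n :=
  mem_gammaUpTo (gammaUpTo_self n k ▸ h)

lemma pairwise_GammaK (n k : ℕ) : (GammaK n k).Pairwise fun p q ↦ q.1 ≤ p.1 :=
  gammaUpTo_self n k ▸ pairwise_gammaUpTo n k k

end Gamma

section Conj

variable {n : ℕ} {lam : ℕ → ℕ}

lemma conj_le (n : ℕ) (lam : ℕ → ℕ) (j : ℕ) : conj n lam j ≤ n :=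
  (Finset.card_filter_le _ _).trans (Finset.card_range n).le

lemma conj_antitone (n : ℕ) (lam : ℕ → ℕ) : Antitone (conj n lam) := fun _ _ hj ↦
  Finset.card_le_card (Finset.monotone_filter_right _ fun _ _ hi ↦ hj.trans hi)

lemma conj_eq_zero (hlam : ∀ i < n, lam i ≤ lam 0) {c : ℕ} (hc : lam 0 < c) :
    conj n lam c = 0 :=
  Finset.card_eq_zero.mpr (Finset.filter_eq_empty_iff.mpr fun i hi ↦
    (hlam i (Finset.mem_range.mp hi)).trans_lt hc |>.not_ge)

lemma apply_le_apply_zero_of_decreasing (hdec : ∀ i, i + 1 < n → lam (i + 1) < lam i) :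
    ∀ i < n, lam i ≤ lam 0 := by
  intro i hi
  induction i with
  | zero => exact le_rfl
  | succ i ih => exact (hdec i hi).le.trans (ih (by omega))

end Conj

section Columns

variable {n : ℕ} {k : ℕ → ℕ} {T : List (List (ℕ × ℕ))}

lemma flatten_take_succ {α : Type*} (T : List (List α)) (c : ℕ) :
    (T.take (c + 1)).flatten = (T.take c).flatten ++ T.getD c [] := by
  rcases lt_or_ge c T.length with h | h
  · rw [List.take_add_one, List.flatten_append, List.getElem?_eq_getElem h,
      List.getD_eq_getElem T [] h, Option.toList_some, List.flatten_singleton]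
  · rw [List.take_of_length_le h, List.take_of_length_le (Nat.le_succ_of_le h),
      List.getD_eq_default _ _ h, List.append_nil]

lemma bounds_of_mem_flatten (hsub : ∀ j < T.length, (T.getD j []).Sublist (GammaK n (k j)))
    {p : ℕ × ℕ} (hp : p ∈ T.flatten) : 1 ≤ p.1 ∧ p.1 < p.2 ∧ p.2 ≤ n := by
  obtain ⟨l, hl, hpl⟩ := List.mem_flatten.mp hp
  obtain ⟨j, hj, rfl⟩ := List.mem_iff_getElem.mp hl
  have := mem_GammaK ((hsub j hj).subset (List.getD_eq_getElem T [] hj ▸ hpl))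
  omega

end Columns

namespace AdmissiblePair

variable {n : ℕ} {lam : ℕ → ℕ} (a : AdmissiblePair n lam)

lemma column_sublist (c : ℕ) : (a.T.getD c []).Sublist (GammaK n (conj n lam (c + 1))) := by
  rcases lt_or_ge c a.T.length with h | h
  · exact a.hsub c h
  · rw [List.getD_eq_default _ _ h]
    exact List.nil_sublist _

lemma bounds_of_mem_flatten {p : ℕ × ℕ} (hp : p ∈ a.T.flatten) :
    1 ≤ p.1 ∧ p.1 < p.2 ∧ p.2 ≤ n :=
  _root_.bounds_of_mem_flatten a.hsub hp

lemma ascends : Ascends a.w a.T.flatten :=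
  (lengthChain_iff_ascends fun _ ↦ a.bounds_of_mem_flatten).mp a.hchain

lemma piCol_succ (c : ℕ) : piCol a (c + 1) = applyT (piCol a c) (a.T.getD c []) := by
  rw [piCol, flatten_take_succ, applyT_append, piCol]

lemma ascends_column (c : ℕ) : Ascends (piCol a c) (a.T.getD c []) := by
  have hsplit := a.ascends
  rw [← List.take_append_drop (c + 1) a.T, List.flatten_append, flatten_take_succ,
    List.append_assoc, ascends_append, ascends_append] at hsplit
  exact hsplit.2.1

lemma fixesOutside_piCol (c : ℕ) : FixesOutside n (piCol a c) :=
  FixesOutside.applyT a.hw fun _ hp ↦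
    a.bounds_of_mem_flatten ((List.take_sublist c a.T).flatten.subset hp)

lemma piCol_le_piCol_succ {c r : ℕ} (hr : r ≤ conj n lam (c + 1)) :
    piCol a c r ≤ piCol a (c + 1) r := by
  rw [piCol_succ]
  refine le_applyT_apply (a.ascends_column c) fun p hp ↦ ?_
  have := mem_GammaK ((a.column_sublist c).subset hp)
  omega

lemma piCol_succ_ne {c r r' : ℕ} (hr : r < r') (hr' : r' ≤ conj n lam (c + 1)) :
    piCol a (c + 1) r' ≠ piCol a c r := by
  rw [piCol_succ]
  refine applyT_apply_ne (fun p hp ↦ ?_) ((pairwise_GammaK n _).sublist (a.column_sublist c))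
    hr hr'
  have := mem_GammaK ((a.column_sublist c).subset hp)
  omega

end AdmissiblePair

lemma sigmaOf_of_mem {n : ℕ} {lam : ℕ → ℕ} (a : AdmissiblePair n lam) {r c : ℕ}
    (h : 1 ≤ r ∧ 1 ≤ c ∧ r ≤ conj n lam c) : sigmaOf a r c = piCol a c r :=
  if_pos h

theorem isHHLFilling_sigmaOf {n : ℕ} {lam : ℕ → ℕ} (a : AdmissiblePair n lam) :
    IsHHLFilling n lam (sigmaOf a) := by
  refine ⟨fun r c h ↦ if_neg h, fun r c hr hc hrc ↦ ?_, fun r c hr hc hrc ↦ ?_,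
    fun r r' c hc hr hr' hrc hr'c hne ↦ ?_, fun r r' c hc hr hrc hr' hr'c hlt ↦ ?_⟩
  · rw [sigmaOf_of_mem a ⟨hr, hc, hrc⟩]
    exact (a.fixesOutside_piCol c).apply_mem hr (hrc.trans (conj_le n lam c))
  · rw [sigmaOf_of_mem a ⟨hr, hc, hrc.trans (conj_antitone n lam c.le_succ)⟩,
      sigmaOf_of_mem a ⟨hr, by omega, hrc⟩]
    exact a.piCol_le_piCol_succ hrc
  · rw [sigmaOf_of_mem a ⟨hr, hc, hrc⟩, sigmaOf_of_mem a ⟨hr', hc, hr'c⟩]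
    exact (piCol a c).injective.ne hne
  · rw [sigmaOf_of_mem a ⟨hr, hc, hrc⟩, sigmaOf_of_mem a ⟨hr', by omega, hr'c⟩]
    exact (a.piCol_succ_ne hlt hr'c).symm

section Construction

variable {n k : ℕ} {b : ℕ → ℕ}

/-- Row `m` fetches its target `b m` from position `u⁻¹ (b m)`, which lies beyond row `k`: the
rows above `m` do not hold `b m` (the attack-type hypothesis), and the rows in `(m, k]` already
hold their own targets, which differ from `b m`. -/
lemma exists_sublist_gammaUpTo (hmaps : Set.MapsTo b (Set.Icc 1 k) (Set.Icc 1 n))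
    (hinj : Set.InjOn b (Set.Icc 1 k)) :
    ∀ m ≤ k, ∀ u : Perm ℕ, FixesOutside n u →
      (∀ r, 1 ≤ r → r ≤ m → u r ≤ b r) →
      (∀ r r', 1 ≤ r → r < r' → r' ≤ m → b r' ≠ u r) →
      (∀ r, m < r → r ≤ k → u r = b r) →
      ∃ T : List (ℕ × ℕ), T.Sublist (gammaUpTo n k m) ∧ Ascends u T ∧
        ∀ r, 1 ≤ r → r ≤ k → applyT u T r = b r := by
  intro m
  induction m with
  | zero =>
    intro _ u _ _ _ hdone
    exact ⟨[], List.nil_sublist _, trivial, fun r hr hrk ↦ hdone r hr hrk⟩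
  | succ m ih =>
    intro hm u hu hle hne hdone
    have hsub : (gammaUpTo n k m).Sublist (gammaUpTo n k (m + 1)) :=
      gammaUpTo_succ n k m ▸ List.sublist_append_right _ _
    by_cases hfixed : u (m + 1) = b (m + 1)
    · obtain ⟨T, hT, hasc, hval⟩ := ih (by omega) u hu (fun r h1 h2 ↦ hle r h1 (by omega))
        (fun r r' h1 h2 h3 ↦ hne r r' h1 h2 (by omega)) fun r h1 h2 ↦ by
          rcases (show r = m + 1 ∨ m + 1 < r by omega) with rfl | h
          exacts [hfixed, hdone r h h2]
      exact ⟨T, hT.trans hsub, hasc, hval⟩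
    have hb := hmaps ⟨m.succ_pos, hm⟩
    set pos := u.symm (b (m + 1))
    have hupos : u pos = b (m + 1) := u.apply_symm_apply _
    have hpos : 1 ≤ pos ∧ pos ≤ n := hu.symm.apply_mem hb.1 hb.2
    have hkpos : k < pos := by
      by_contra hposk
      rcases lt_trichotomy pos (m + 1) with hlt | heq | hgt
      · exact hne pos (m + 1) hpos.1 hlt le_rfl hupos.symm
      · exact hfixed (heq ▸ hupos)
      · exact hgt.ne' (hinj ⟨hpos.1, not_lt.mp hposk⟩ ⟨m.succ_pos, hm⟩
          ((hdone pos hgt (not_lt.mp hposk)).symm.trans hupos))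
    set u' := u * swap (m + 1) pos
    have hu'm : u' (m + 1) = b (m + 1) := by
      rw [Perm.mul_apply, swap_apply_left, hupos]
    have hu'r {r : ℕ} (hr : r ≤ k) (hrm : r ≠ m + 1) : u' r = u r := by
      rw [Perm.mul_apply, swap_apply_of_ne_of_ne hrm (by omega)]
    obtain ⟨T, hT, hasc, hval⟩ := ih (by omega) u' (hu.mul_swap ⟨m.succ_pos, by omega⟩ hpos)
      (fun r h1 h2 ↦ (hu'r (r := r) (by omega) (by omega)).symm ▸ hle r h1 (by omega))
      (fun r r' h1 h2 h3 ↦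
        (hu'r (r := r) (by omega) (by omega)).symm ▸ hne r r' h1 h2 (by omega))
      fun r h1 h2 ↦ by
        rcases (show r = m + 1 ∨ m + 1 < r by omega) with rfl | h
        exacts [hu'm, (hu'r h2 (by omega)).trans (hdone r h h2)]
    have hmem : (m + 1, pos) ∈ GammaKI n k (m + 1) := mem_GammaKI.mpr ⟨rfl, hkpos, hpos.2⟩
    refine ⟨(m + 1, pos) :: T, ?_, ⟨?_, hasc⟩, hval⟩
    · rw [gammaUpTo_succ]
      exact (List.singleton_sublist.mpr hmem).append hT
    · rw [hupos]
      exact lt_of_le_of_ne (hle (m + 1) m.succ_pos le_rfl) hfixed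

theorem exists_sublist_GammaK_applyT_eq {u : Perm ℕ} (hu : FixesOutside n u)
    (hmaps : Set.MapsTo b (Set.Icc 1 k) (Set.Icc 1 n)) (hinj : Set.InjOn b (Set.Icc 1 k))
    (hle : ∀ r, 1 ≤ r → r ≤ k → u r ≤ b r)
    (hne : ∀ r r', 1 ≤ r → r < r' → r' ≤ k → b r' ≠ u r) :
    ∃ T : List (ℕ × ℕ), T.Sublist (GammaK n k) ∧ Ascends u T ∧
      ∀ r, 1 ≤ r → r ≤ k → applyT u T r = b r :=
  gammaUpTo_self n k ▸
    exists_sublist_gammaUpTo hmaps hinj k le_rfl u hu hle hne fun _ h1 h2 ↦ (h1.not_ge h2).elim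

end Construction

namespace IsHHLFilling

variable {n : ℕ} {lam : ℕ → ℕ} {σ : ℕ → ℕ → ℕ} (hσ : IsHHLFilling n lam σ)
include hσ

lemma mapsTo_column {c : ℕ} (hc : 1 ≤ c) :
    Set.MapsTo (σ · c) (Set.Icc 1 (conj n lam c)) (Set.Icc 1 n) :=
  fun r hr ↦ hσ.2.1 r c hr.1 hc hr.2

lemma injOn_column {c : ℕ} (hc : 1 ≤ c) : Set.InjOn (σ · c) (Set.Icc 1 (conj n lam c)) :=
  fun r hr r' hr' h ↦ by_contra fun hne ↦ hσ.2.2.2.1 r r' c hc hr.1 hr'.1 hr.2 hr'.2 hne h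

lemma le_succ_column_and_ne {c : ℕ} (hc : 1 ≤ c) {u : Perm ℕ}
    (hu : Set.EqOn u (σ · c) (Set.Icc 1 (conj n lam c))) {r : ℕ} (hr : 1 ≤ r)
    (hrk : r ≤ conj n lam (c + 1)) :
    u r ≤ σ r (c + 1) ∧ ∀ r', r < r' → r' ≤ conj n lam (c + 1) → σ r' (c + 1) ≠ u r := by
  have hrk' := hrk.trans (conj_antitone n lam c.le_succ)
  rw [hu ⟨hr, hrk'⟩]
  exact ⟨hσ.2.2.1 r c hr hc hrk, fun r' hrr' hr'k ↦
    (hσ.2.2.2.2 r r' c hc hr hrk' (by omega) hr'k hrr').symm⟩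

lemma le_column_and_ne {c : ℕ} (hc : 1 ≤ c) {u : Perm ℕ}
    (hu : Set.EqOn u (σ · c) (Set.Icc 1 (conj n lam c))) {r : ℕ} (hr : 1 ≤ r)
    (hrk : r ≤ conj n lam c) :
    u r ≤ σ r c ∧ ∀ r', r < r' → r' ≤ conj n lam c → σ r' c ≠ u r := by
  rw [hu ⟨hr, hrk⟩]
  exact ⟨le_rfl, fun r' hrr' hr'k ↦ hσ.2.2.2.1 r' r c hc (by omega) hr hr'k hrk (by omega)⟩

lemma exists_columns {w : Perm ℕ} (hw : FixesOutside n w)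
    (hw1 : Set.EqOn w (σ · 1) (Set.Icc 1 (conj n lam 1))) (c : ℕ) :
    ∃ Ts : List (List (ℕ × ℕ)), Ts.length = c ∧
      (∀ j < c, (Ts.getD j []).Sublist (GammaK n (conj n lam (j + 1)))) ∧
      Ascends w Ts.flatten ∧
      ∀ j, 1 ≤ j → j ≤ c →
        Set.EqOn (applyT w (Ts.take j).flatten) (σ · j) (Set.Icc 1 (conj n lam j)) := by
  induction c with
  | zero => exact ⟨[], rfl, fun _ h ↦ (Nat.not_lt_zero _ h).elim, trivial, by omega⟩
  | succ c ih =>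
    obtain ⟨Ts, hlen, hsub, hasc, hval⟩ := ih
    set u := applyT w Ts.flatten
    have hu : FixesOutside n u :=
      hw.applyT fun _ hp ↦ bounds_of_mem_flatten (fun j hj ↦ hsub j (hlen ▸ hj)) hp
    have hprev : ∀ r, 1 ≤ r → r ≤ conj n lam (c + 1) → u r ≤ σ r (c + 1) ∧
        ∀ r', r < r' → r' ≤ conj n lam (c + 1) → σ r' (c + 1) ≠ u r := by
      rcases c with _ | c
      -- `π_0 = w` carries column `1`, which stands in for the missing column `0`.
      · obtain rfl : Ts = [] := List.length_eq_zero_iff.mp hlen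
        exact fun r hr hrk ↦ hσ.le_column_and_ne le_rfl hw1 hr hrk
      · have hu_col : Set.EqOn u (σ · (c + 1)) (Set.Icc 1 (conj n lam (c + 1))) := by
          simpa [List.take_of_length_le hlen.le] using hval (c + 1) (by omega) le_rfl
        exact fun r hr hrk ↦ hσ.le_succ_column_and_ne (by omega) hu_col hr hrk
    obtain ⟨Tc, hTc, hascc, hvalc⟩ := exists_sublist_GammaK_applyT_eq hu
      (hσ.mapsTo_column (Nat.le_add_left 1 c)) (hσ.injOn_column (Nat.le_add_left 1 c))
      (fun r h1 h2 ↦ (hprev r h1 h2).1) fun r r' h1 h2 h3 ↦ (hprev r h1 (by omega)).2 r' h2 h3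
    refine ⟨Ts ++ [Tc], by simp [hlen], fun j hj ↦ ?_, ?_, fun j h1 h2 ↦ ?_⟩
    · rcases (show j < c ∨ j = c by omega) with hjc | rfl
      · rw [List.getD_append _ _ _ _ (hlen ▸ hjc)]
        exact hsub j hjc
      · simpa [List.getD_append_right _ _ _ _ hlen.le, hlen] using hTc
    · rw [List.flatten_append, ascends_append, List.flatten_singleton]
      exact ⟨hasc, hascc⟩
    · rcases (show j ≤ c ∨ j = c + 1 by omega) with hjc | rfl
      · rw [List.take_append_of_le_length (hlen ▸ hjc)]
        exact hval j h1 hjc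
      · rw [List.take_of_length_le (by simp [hlen]), List.flatten_append, List.flatten_singleton,
          applyT_append]
        exact fun r hr ↦ hvalc r hr.1 hr.2

theorem exists_sigmaOf_eq (hlam : ∀ i < n, lam i ≤ lam 0) :
    ∃ a : AdmissiblePair n lam, sigmaOf a = σ := by
  obtain ⟨w, hw, hw1⟩ := exists_fixesOutside_eqOn (conj_le n lam 1) (hσ.mapsTo_column le_rfl)
    (hσ.injOn_column le_rfl)
  obtain ⟨T, hlen, hsub, hasc, hval⟩ := hσ.exists_columns hw hw1 (lam 0)
  have hsub' : ∀ j < T.length, (T.getD j []).Sublist (GammaK n (conj n lam (j + 1))) :=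
    fun j hj ↦ hsub j (hlen ▸ hj)
  refine ⟨⟨w, T, hw, hlen, hsub',
    (lengthChain_iff_ascends fun _ ↦ bounds_of_mem_flatten hsub').mpr hasc⟩, ?_⟩
  funext r c
  by_cases h : 1 ≤ r ∧ 1 ≤ c ∧ r ≤ conj n lam c
  · have hc : c ≤ lam 0 := not_lt.mp fun hlt ↦ by
      rw [conj_eq_zero hlam hlt] at h
      omega
    rw [sigmaOf_of_mem _ h]
    exact hval c h.2.1 hc ⟨h.1, h.2.2⟩
  · exact (if_neg h).trans (hσ.1 r c h).symm

end IsHHLFilling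

theorem alcove_surjection_HHL_fillings_general (n : ℕ) (lam : ℕ → ℕ)
    (hdec : ∀ i, i + 1 < n → lam (i + 1) < lam i) :
    (∀ a : AdmissiblePair n lam, IsHHLFilling n lam (sigmaOf a)) ∧
    (∀ σ : ℕ → ℕ → ℕ, IsHHLFilling n lam σ →
      ∃ a : AdmissiblePair n lam, sigmaOf a = σ) :=
  ⟨isHHLFilling_sigmaOf, fun _ hσ ↦
    hσ.exists_sigmaOf_eq (apply_le_apply_zero_of_decreasing hdec)⟩

/-- First compression of the Ram–Yip formula for Hall–Littlewood polynomials (for `λ` with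
distinct parts): the map `(w, T) ↦ σ(w, T)` is a surjection from the set of admissible
pairs onto the set of fillings `𝒯_{[n]}(λ)` appearing in the Haglund–Haiman–Loehr formula. -/
theorem alcove_surjection_HHL_fillings (n : ℕ) (hn : 2 ≤ n) (lam : ℕ → ℕ)
    (hdec : ∀ i, i + 1 < n → lam (i + 1) < lam i)
    (hzero : ∀ i, n - 1 ≤ i → lam i = 0) :
    (∀ a : AdmissiblePair n lam, IsHHLFilling n lam (sigmaOf a)) ∧
    (∀ σ : ℕ → ℕ → ℕ, IsHHLFilling n lam σ →
      ∃ a : AdmissiblePair n lam, sigmaOf a = σ) :=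
  alcove_surjection_HHL_fillings_general n lam hdec
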